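/- In the Loidreau–Overbeck setting, assume rk_F(λ_(n−t−k)(E)_a⃗) = t. Then there exist invertible matrices W^(i) ∈ GF(q)^(n_i×n_i), i = 1, …, ℓ, such that λ_(n−t−k)(E)_a⃗ · diag(W^(1), …, W^(ℓ)) has exactly t nonzero columns, and these t columns are linearly independent over F. -/

import Mathlib

/-!
Over the fixed field `K` of `σ`, the columns of the block `E⁽ⁱ⁾` span a `K`-space of
dimension `tᵢ`, so a `K`-basis of `K^{nᵢ}` adapted to the kernel of the column map gives an
invertible `W⁽ⁱ⁾` for which all but `tᵢ` columns of `E⁽ⁱ⁾ W⁽ⁱ⁾` vanish. Since `σ` fixes `K`,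
the operators `D_a^j` commute with `K`-linear column operations, so
`λ(E) · diag(W) = λ(E · diag(W))` has at most `t` nonzero columns. Its rank is still `t`, so
there are exactly `t` of them and they are linearly independent.
-/

namespace Stmt4

/-- `genNorm σ a i = σ^(i-1)(a) ⋯ σ(a) · a`, the generalized power function `N_i(a)`. -/
def genNorm {F : Type} [Field F] (σ : F ≃+* F) (a : F) : ℕ → F
  | 0 => 1
  | i + 1 => (⇑σ)^[i] a * genNorm σ a i

/-- Generalized operator `D_a^i(b) = σ^i(b) · N_i(a)` for `i ∈ ℕ`. -/
def opev {F : Type} [Field F] (σ : F ≃+* F) (a b : F) (i : ℕ) : F :=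
  (⇑σ)^[i] b * genNorm σ a i

/-- `b` is σ-conjugate to `a`, i.e. `b = σ(c)·a·c⁻¹` for some nonzero `c`. -/
def SConj {F : Type} [Field F] (σ : F ≃+* F) (a b : F) : Prop :=
  ∃ c : F, c ≠ 0 ∧ b = σ c * a * c⁻¹

/-- σ-generalized Moore matrix `λ_d(x)_a⃗` w.r.t. the length partition `nn`:
its row `r` applies `D_{a_i}^r` entrywise to the `i`-th block of `x`. -/
def moore {F : Type} [Field F] (σ : F ≃+* F) {ℓ : ℕ} (nn : Fin ℓ → ℕ) (aa : Fin ℓ → F)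
    (d : ℕ) (x : (Σ i : Fin ℓ, Fin (nn i)) → F) :
    Matrix (Fin d) (Σ i : Fin ℓ, Fin (nn i)) F :=
  Matrix.of fun r p => opev σ (aa p.1) (x p) (r : ℕ)

/-- `λ_d(X)_a⃗` for a matrix `X`: the stack of `λ_d(x_j)_a⃗` over the rows of `X`. -/
def mooreMat {F : Type} [Field F] (σ : F ≃+* F) {ℓ : ℕ} (nn : Fin ℓ → ℕ) (aa : Fin ℓ → F)
    {s : ℕ} (d : ℕ) (X : Matrix (Fin s) (Σ i : Fin ℓ, Fin (nn i)) F) :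
    Matrix (Fin s × Fin d) (Σ i : Fin ℓ, Fin (nn i)) F :=
  Matrix.of fun r p => opev σ (aa p.1) (X r.1 p) (r.2 : ℕ)

/-- `rk_q` of a vector: the `K`-dimension of the `K`-span of its entries. -/
noncomputable def rkq (K : Type) [Field K] {F : Type} [Field F] [Algebra K F] {ι : Type}
    (v : ι → F) : ℕ :=
  Module.finrank K (Submodule.span K (Set.range v))

/-- `rk_q` of a matrix: the `K`-dimension of the `K`-span of its columns. -/
noncomputable def rkqMat (K : Type) [Field K] {F : Type} [Field F] [Algebra K F]
    {s : ℕ} {ι : Type} (X : Matrix (Fin s) ι F) : ℕ :=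
  Module.finrank K (Submodule.span K (Set.range fun j : ι => fun r : Fin s => X r j))

/-- Sum-rank weight of a blockwise vector. -/
noncomputable def wtV (K : Type) [Field K] {F : Type} [Field F] [Algebra K F] {ℓ : ℕ}
    (nn : Fin ℓ → ℕ) (x : (Σ i : Fin ℓ, Fin (nn i)) → F) : ℕ :=
  ∑ i, rkq K fun μ : Fin (nn i) => x ⟨i, μ⟩

/-- Sum-rank weight of a blockwise matrix. -/
noncomputable def wtM (K : Type) [Field K] {F : Type} [Field F] [Algebra K F] {s ℓ : ℕ}
    (nn : Fin ℓ → ℕ) (X : Matrix (Fin s) (Σ i : Fin ℓ, Fin (nn i)) F) : ℕ :=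
  ∑ i, rkqMat K (Matrix.of fun (r : Fin s) (μ : Fin (nn i)) => X r ⟨i, μ⟩)

/-- Codeword `C(M) = M · λ_k(β)_a⃗` of the `s`-interleaved linearized Reed–Solomon code. -/
def codeword {F : Type} [Field F] (σ : F ≃+* F) {ℓ : ℕ} (nn : Fin ℓ → ℕ) (aa : Fin ℓ → F)
    (β : (Σ i : Fin ℓ, Fin (nn i)) → F) {s : ℕ} (k : ℕ) (M : Matrix (Fin s) (Fin k) F) :
    Matrix (Fin s) (Σ i : Fin ℓ, Fin (nn i)) F :=
  M * moore σ nn aa k β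

/-- Loidreau–Overbeck decoding matrix: the stack of `λ_{n-t-1}(β)_a⃗` and
`λ_{n-t-k}(r_j)_a⃗` for the rows `r_j` of `R`. -/
def LOmat {F : Type} [Field F] (σ : F ≃+* F) {ℓ : ℕ} (nn : Fin ℓ → ℕ) (aa : Fin ℓ → F)
    (β : (Σ i : Fin ℓ, Fin (nn i)) → F) {s : ℕ}
    (R : Matrix (Fin s) (Σ i : Fin ℓ, Fin (nn i)) F) (n t k : ℕ) :
    Matrix (Fin (n - t - 1) ⊕ Fin s × Fin (n - t - k)) (Σ i : Fin ℓ, Fin (nn i)) F :=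
  Matrix.of fun r p =>
    match r with
    | Sum.inl u => opev σ (aa p.1) (β p) (u : ℕ)
    | Sum.inr ju => opev σ (aa p.1) (R ju.1 p) (ju.2 : ℕ)

end Stmt4

open Matrix Module

theorem Matrix.mul_blockDiagonal'_apply {l o R : Type*} {m' n' : o → Type*} [Fintype o]
    [DecidableEq o] [∀ i, Fintype (m' i)] [NonUnitalNonAssocSemiring R]
    (X : Matrix l (Σ i, m' i) R) (B : ∀ i, Matrix (m' i) (n' i) R) (r : l) (i : o) (j : n' i) :
    (X * blockDiagonal' B) r ⟨i, j⟩ = ∑ ν, X r ⟨i, ν⟩ * B i ν j := by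
  rw [mul_apply, ← Finset.univ_sigma_univ, Finset.sum_sigma, Finset.sum_eq_single i]
  · simp only [blockDiagonal'_apply_eq]
  · intro i' _ hi'
    exact Finset.sum_eq_zero fun ν _ => by rw [blockDiagonal'_apply_ne _ _ _ hi', mul_zero]
  · simp

theorem Matrix.isUnit_blockDiagonal' {o R : Type*} {m' : o → Type*} [Fintype o] [DecidableEq o]
    [∀ i, Fintype (m' i)] [∀ i, DecidableEq (m' i)] [Semiring R]
    {B : ∀ i, Matrix (m' i) (m' i) R} (hB : ∀ i, IsUnit (B i)) : IsUnit (blockDiagonal' B) :=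
  (Pi.isUnit_iff.mpr hB).map (blockDiagonal'RingHom m' R)

theorem Matrix.col_mul_blockDiagonal' {l o R : Type*} {m' n' : o → Type*} [Fintype o]
    [DecidableEq o] [∀ i, Fintype (m' i)] [NonUnitalNonAssocSemiring R]
    (X : Matrix l (Σ i, m' i) R) (B : ∀ i, Matrix (m' i) (n' i) R) (i : o) (j : n' i) :
    (X * blockDiagonal' B).col ⟨i, j⟩ = (X.submatrix id (Sigma.mk i) * B i).col j := by
  ext r
  exact X.mul_blockDiagonal'_apply B r i j

theorem Module.Basis.exists_ncard_apply_ne_zero_le {K V W ι : Type*} [Field K]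
    [AddCommGroup V] [Module K V] [AddCommGroup W] [Module K W] [Fintype ι]
    (b₀ : Basis ι K V) (φ : V →ₗ[K] W) :
    ∃ b : Basis ι K V, {j | φ (b j) ≠ 0}.ncard ≤ finrank K (LinearMap.range φ) := by
  have := b₀.finiteDimensional_of_finite
  obtain ⟨q, hq⟩ := (LinearMap.ker φ).exists_isCompl
  let c := ((finBasis K (LinearMap.ker φ)).prod (finBasis K q)).map
    (Submodule.prodEquivOfIsCompl _ q hq)
  let e := c.indexEquiv b₀
  refine ⟨c.reindex e, ?_⟩
  have hsub : {j | φ (c.reindex e j) ≠ 0} ⊆ Set.range (e ∘ Sum.inr) := by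
    intro j hj
    rcases h : e.symm j with x | y
    · refine absurd ?_ hj
      rw [Basis.reindex_apply, h]
      simp [c]
    · exact ⟨y, by simp [← h]⟩
  have hrank : finrank K q = finrank K (LinearMap.range φ) := by
    have h1 := Submodule.finrank_add_eq_of_isCompl hq
    have h2 := LinearMap.finrank_range_add_finrank_ker φ
    omega
  calc _ ≤ (Set.range (e ∘ Sum.inr)).ncard := Set.ncard_le_ncard hsub
    _ = finrank K (LinearMap.range φ) := by
      rw [Set.ncard_range_of_injective (e.injective.comp Sum.inr_injective), Nat.card_fin, hrank]

theorem Set.ncard_sigma_eq_sum {ι : Type*} [Fintype ι] {β : ι → Type*} [∀ i, Finite (β i)]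
    (S : Set (Σ i, β i)) : S.ncard = ∑ i, {j | (⟨i, j⟩ : Σ i, β i) ∈ S}.ncard := by
  let e : S ≃ Σ i, {j | (⟨i, j⟩ : Σ i, β i) ∈ S} :=
    { toFun := fun x => ⟨x.1.1, x.1.2, x.2⟩
      invFun := fun y => ⟨⟨y.1, y.2.1⟩, y.2.2⟩
      left_inv := fun _ => rfl
      right_inv := fun _ => rfl }
  simp only [← Nat.card_coe_set_eq, Nat.card_congr e, Nat.card_sigma]

theorem Matrix.span_col_ne_zero {m n F : Type*} [Field F] (P : Matrix m n F) :
    Submodule.span F (P.col '' {p | P.col p ≠ 0}) = Submodule.span F (Set.range P.col) := by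
  rw [show {p | P.col p ≠ 0} = (P.col ⁻¹' {0})ᶜ from rfl, Set.image_compl_preimage]
  exact Submodule.span_sdiff_singleton_zero

theorem Matrix.ncard_col_ne_zero_eq_rank_and_linearIndependent {m n F : Type*} [Fintype m]
    [Fintype n] [Field F] (P : Matrix m n F) (h : {p | P.col p ≠ 0}.ncard ≤ P.rank) :
    {p | P.col p ≠ 0}.ncard = P.rank ∧
      LinearIndependent F fun q : {p | P.col p ≠ 0} => P.col q := by
  classical
  set S := {p | P.col p ≠ 0}
  have hspan : Set.finrank F (Set.range fun q : S => P.col q) = P.rank := by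
    rw [Set.finrank, Set.range_comp' .., Subtype.range_coe, Matrix.span_col_ne_zero P,
      P.rank_eq_finrank_span_cols]
  have hle := finrank_range_le_card (R := F) fun q : S => P.col q
  rw [hspan, ← Nat.card_eq_fintype_card, Nat.card_coe_set_eq] at hle
  have hcard : S.ncard = P.rank := le_antisymm h hle
  refine ⟨hcard, linearIndependent_iff_card_eq_finrank_span.mpr ?_⟩
  rw [hspan, ← hcard, ← Nat.card_coe_set_eq, Nat.card_eq_fintype_card]

namespace Stmt4

theorem opev_sum_mul_of_fixed {F ι : Type} [Field F] [Fintype ι] (σ : F ≃+* F) (a : F)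
    (b c : ι → F) (hc : ∀ ν, σ (c ν) = c ν) (i : ℕ) :
    opev σ a (∑ ν, b ν * c ν) i = ∑ ν, opev σ a (b ν) i * c ν := by
  simp only [opev, ← RingAut.coe_pow, map_sum, map_mul, Finset.sum_mul]
  refine Finset.sum_congr rfl fun ν _ => ?_
  rw [RingAut.coe_pow, Function.iterate_fixed (hc ν)]
  ring

theorem mooreMat_mul_blockDiagonal' {F : Type} [Field F] (σ : F ≃+* F) {ℓ : ℕ}
    (nn : Fin ℓ → ℕ) (aa : Fin ℓ → F) {s : ℕ} (d : ℕ) (X : Matrix (Fin s) (Σ i, Fin (nn i)) F)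
    (B : ∀ i, Matrix (Fin (nn i)) (Fin (nn i)) F) (hB : ∀ i ν j, σ (B i ν j) = B i ν j) :
    mooreMat σ nn aa d X * blockDiagonal' B = mooreMat σ nn aa d (X * blockDiagonal' B) := by
  ext r ⟨i, j⟩
  simp only [mul_blockDiagonal'_apply, mooreMat, of_apply]
  exact (opev_sum_mul_of_fixed σ _ _ _ (fun ν => hB i ν j) _).symm

theorem mooreMat_col_eq_zero {F : Type} [Field F] (σ : F ≃+* F) {ℓ : ℕ} (nn : Fin ℓ → ℕ)
    (aa : Fin ℓ → F) {s : ℕ} (d : ℕ) {X : Matrix (Fin s) (Σ i, Fin (nn i)) F}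
    {p : Σ i, Fin (nn i)} (h : X.col p = 0) : (mooreMat σ nn aa d X).col p = 0 := by
  ext r
  simp [mooreMat, opev, show X r.1 p = 0 from congrFun h r.1]

theorem exists_isUnit_ncard_col_mul_map_ne_zero_le (K : Type) {F ι : Type} [Field K] [Field F]
    [Algebra K F] [Fintype ι] [DecidableEq ι] {s : ℕ} (X : Matrix (Fin s) ι F) :
    ∃ W : Matrix ι ι K, IsUnit W ∧
      {j | (X * W.map (algebraMap K F)).col j ≠ 0}.ncard ≤ rkqMat K X := by
  let φ := Fintype.linearCombination K X.col
  obtain ⟨b, hb⟩ := (Pi.basisFun K ι).exists_ncard_apply_ne_zero_le φ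
  refine ⟨(Pi.basisFun K ι).toMatrix b,
    @isUnit_of_invertible _ _ _ ((Pi.basisFun K ι).invertibleToMatrix b), ?_⟩
  have hcol : ∀ j,
      (X * ((Pi.basisFun K ι).toMatrix b).map (algebraMap K F)).col j = φ (b j) := by
    intro j
    ext r
    simp [φ, Matrix.mul_apply, Fintype.linearCombination_apply, Basis.toMatrix_apply,
      Algebra.smul_def, mul_comm]
  simp only [hcol]
  rwa [rkqMat, ← Fintype.range_linearCombination]

theorem LO_nonzero_columns_general
    {K F : Type} [Field K] [Field F] [Algebra K F]
    (σ : F ≃+* F)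
    (hfix : ∀ x : F, σ x = x ↔ x ∈ Set.range (algebraMap K F))
    {ℓ : ℕ} (nn : Fin ℓ → ℕ) (aa : Fin ℓ → F)
    {s : ℕ} {k n t : ℕ}
    (E : Matrix (Fin s) (Σ i : Fin ℓ, Fin (nn i)) F)
    (ht : wtM K nn E = t)
    (hrk : (mooreMat σ nn aa (n - t - k) E).rank = t)
    :
    ∃ (W : (i : Fin ℓ) → Matrix (Fin (nn i)) (Fin (nn i)) K)
      (P : Matrix (Fin s × Fin (n - t - k)) (Σ i : Fin ℓ, Fin (nn i)) F),
      (∀ i, IsUnit (W i)) ∧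
      (∀ (r : Fin s × Fin (n - t - k)) (p : Σ i : Fin ℓ, Fin (nn i)),
          P r p = ∑ ν : Fin (nn p.1),
            mooreMat σ nn aa (n - t - k) E r ⟨p.1, ν⟩ * algebraMap K F (W p.1 ν p.2)) ∧
      {p : Σ i : Fin ℓ, Fin (nn i) | (fun r => P r p) ≠ 0}.ncard = t ∧
      LinearIndependent F
        fun q : {p : Σ i : Fin ℓ, Fin (nn i) | (fun r => P r p) ≠ 0} =>
          fun r => P r q.1 := by
  choose W hW hWcols using fun i =>
    exists_isUnit_ncard_col_mul_map_ne_zero_le K (E.submatrix id (Sigma.mk i))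
  set D := blockDiagonal' fun i => (W i).map (algebraMap K F)
  set P := mooreMat σ nn aa (n - t - k) E * D
  have hP : P = mooreMat σ nn aa (n - t - k) (E * D) :=
    mooreMat_mul_blockDiagonal' σ nn aa _ E _ fun _ _ _ => (hfix _).mpr ⟨_, rfl⟩
  have hDcol : ∀ i j, (E * D).col ⟨i, j⟩ =
      (E.submatrix id (Sigma.mk i) * (W i).map (algebraMap K F)).col j :=
    col_mul_blockDiagonal' E _
  have hcols : {p | P.col p ≠ 0}.ncard ≤ t :=
    calc {p | P.col p ≠ 0}.ncard
        ≤ {p | (E * D).col p ≠ 0}.ncard := Set.ncard_le_ncard fun p hp h0 =>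
          hp (by rw [hP]; exact mooreMat_col_eq_zero σ nn aa _ h0)
      _ = ∑ i,
          {j | (E.submatrix id (Sigma.mk i) * (W i).map (algebraMap K F)).col j ≠ 0}.ncard := by
          simp only [Set.ncard_sigma_eq_sum, hDcol, Set.mem_ofPred_eq]
      _ ≤ ∑ i, rkqMat K (E.submatrix id (Sigma.mk i)) := Finset.sum_le_sum fun i _ => hWcols i
      _ = t := ht
  have hDdet : IsUnit D.det := (isUnit_iff_isUnit_det D).mp <|
    isUnit_blockDiagonal' fun i => (hW i).map (algebraMap K F).mapMatrix
  have hrank : P.rank = t := (rank_mul_eq_left_of_isUnit_det D _ hDdet).trans hrk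
  obtain ⟨hcard, hindep⟩ :=
    P.ncard_col_ne_zero_eq_rank_and_linearIndependent (hcols.trans hrank.ge)
  exact ⟨W, P, hW, fun r ⟨i, j⟩ => mul_blockDiagonal'_apply _ (fun i => (W i).map _) r i j,
    hcard.trans hrank, hindep⟩

/-- If `rk_F(λ_{n−t−k}(E)_a⃗) = t`, then there are invertible matrices
`W^(i) ∈ GF(q)^{n_i×n_i}` such that `λ_{n−t−k}(E)_a⃗ · diag(W^(1),…,W^(ℓ))` has exactly
`t` nonzero columns, and these `t` columns are linearly independent over `F`. -/
theorem LO_nonzero_columns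
    {K F : Type} [Field K] [Field F] [Algebra K F] [Fintype K] [Fintype F]
    (σ : F ≃+* F)
    (hfix : ∀ x : F, σ x = x ↔ x ∈ Set.range (algebraMap K F))
    {ℓ : ℕ} (hℓ : 1 ≤ ℓ) (nn : Fin ℓ → ℕ) (aa : Fin ℓ → F)
    (ha0 : ∀ i, aa i ≠ 0)
    (haconj : ∀ i j : Fin ℓ, i ≠ j → ¬ SConj σ (aa i) (aa j))
    (β : (Σ i : Fin ℓ, Fin (nn i)) → F)
    (hβ : ∀ i, LinearIndependent K fun μ : Fin (nn i) => β ⟨i, μ⟩)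
    {s : ℕ} (hs : 1 ≤ s) {k n t : ℕ} (hn : n = ∑ i, nn i)
    (hk : 1 ≤ k) (hkn : k ≤ n)
    (M : Matrix (Fin s) (Fin k) F)
    (E R : Matrix (Fin s) (Σ i : Fin ℓ, Fin (nn i)) F)
    (hR : R = codeword σ nn aa β k M + E)
    (ht : wtM K nn E = t) (htnk : t ≤ n - k)
    (hrk : (mooreMat σ nn aa (n - t - k) E).rank = t)
    :
    ∃ (W : (i : Fin ℓ) → Matrix (Fin (nn i)) (Fin (nn i)) K)
      (P : Matrix (Fin s × Fin (n - t - k)) (Σ i : Fin ℓ, Fin (nn i)) F),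
      (∀ i, IsUnit (W i)) ∧
      (∀ (r : Fin s × Fin (n - t - k)) (p : Σ i : Fin ℓ, Fin (nn i)),
          P r p = ∑ ν : Fin (nn p.1),
            mooreMat σ nn aa (n - t - k) E r ⟨p.1, ν⟩ * algebraMap K F (W p.1 ν p.2)) ∧
      {p : Σ i : Fin ℓ, Fin (nn i) | (fun r => P r p) ≠ 0}.ncard = t ∧
      LinearIndependent F
        fun q : {p : Σ i : Fin ℓ, Fin (nn i) | (fun r => P r p) ≠ 0} =>
          fun r => P r q.1 :=
  LO_nonzero_columns_general σ hfix nn aa E ht hrk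

end Stmt4
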